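/- Let R > 0, let V ∈ 𝒮(ℝ²) satisfy 𝓕V(ξ) = 1 for all |ξ| ≤ 2R, and let ψ ∈ 𝒮(ℝ²×ℝ²) satisfy 𝓕ψ(ξ₁,ξ₂) = 0 whenever |ξ₁| > R or |ξ₂| > R. Then ∫∫_{ℝ²×ℝ²} V(x₁−x₂) |ψ(x₁,x₂)|² dx₁dx₂ = ∫_{ℝ²} |ψ(x,x)|² dx; that is, for frequency-localized ψ the smooth convolution potential V acts on |ψ|² exactly as the Dirac delta δ(x₁−x₂). -/

import Mathlib

/-!
Put `Φ = |ψ|²` and `W y = ∫ Φ (x, x - y) dx`, so that the left side is `∫ V W` and the right side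
is `W 0`. By Fubini `𝓕 W η = 𝓕 Φ (η, -η)`, and `𝓕 Φ = 𝓕 ψ̄ ⋆ 𝓕 ψ` vanishes unless the first
frequency has norm at most `2R`, so `𝓕 W` is supported in the ball of radius `2R`. On that ball
`u = 𝓕⁻ V` equals `1`, hence `∫ V W = ∫ (𝓕 u) W = ∫ u (𝓕 W) = ∫ 𝓕 W = W 0` by Fourier inversion;
`W` is integrable and continuous because `Φ` is a Schwartz function.
-/

noncomputable section

open MeasureTheory
open scoped FourierTransform

/-- `ℝ²` as a Euclidean space. -/
abbrev R2 : Type := EuclideanSpace ℝ (Fin 2)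

/-- `ℝ² × ℝ²` as a Euclidean space. -/
abbrev D2 : Type := EuclideanSpace ℝ (Fin 2 × Fin 2)

/-- The point `(x₁, x₂) ∈ ℝ² × ℝ²`. -/
def pack (a b : R2) : D2 :=
  (EuclideanSpace.equiv (Fin 2 × Fin 2) ℝ).symm fun p =>
    if p.1 = 0 then EuclideanSpace.equiv (Fin 2) ℝ a p.2
    else EuclideanSpace.equiv (Fin 2) ℝ b p.2

/-- The `i`-th `ℝ²`-component of a point of `ℝ² × ℝ²`. -/
def projv (i : Fin 2) (x : D2) : R2 :=
  (EuclideanSpace.equiv (Fin 2) ℝ).symm fun a =>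
    EuclideanSpace.equiv (Fin 2 × Fin 2) ℝ x (i, a)

open scoped RealInnerProductSpace ComplexConjugate Pointwise Convolution SchwartzMap

section FourierAnalysis

variable {E : Type*} [NormedAddCommGroup E] [InnerProductSpace ℝ E] [FiniteDimensional ℝ E]
  [MeasurableSpace E] [BorelSpace E]

theorem Real.fourier_conj (f : E → ℂ) (ξ : E) :
    𝓕 (fun x => conj (f x)) ξ = conj (𝓕 f (-ξ)) := by
  simp only [Real.fourier_eq, ← integral_conj, Circle.smul_def, smul_eq_mul, map_mul,
    inner_neg_right, neg_neg, ← Circle.coe_inv_eq_conj, ← AddChar.map_neg_eq_inv]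

theorem Real.integral_fourier_mul_eq {f g : E → ℂ} (hf : Integrable f) (hg : Integrable g) :
    ∫ ξ, 𝓕 f ξ * g ξ = ∫ x, f x * 𝓕 g x := by
  have h := VectorFourier.integral_fourierIntegral_smul_eq_flip (L := innerₗ E)
    Real.continuous_fourierChar continuous_inner hf hg
  rwa [show (innerₗ E).flip = innerₗ E from LinearMap.ext₂ real_inner_comm] at h

namespace SchwartzMap

theorem fourier_fourier_apply_neg (f : 𝓢(E, ℂ)) (x : E) : 𝓕 (𝓕 f) (-x) = f x := by
  rw [fourier_coe (𝓕 f), ← Real.fourierInv_eq_fourier_neg, ← fourierInv_coe,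
    FourierTransform.fourierInv_fourier_eq]

theorem fourier_mul_eq_convolution (f g : 𝓢(E, ℂ)) :
    𝓕 (fun x => f x * g x) = 𝓕 ⇑f ⋆[ContinuousLinearMap.mul ℂ ℂ] 𝓕 ⇑g := by
  set H := convolution (ContinuousLinearMap.mul ℂ ℂ) (𝓕 f) (𝓕 g)
  have hH : ⇑H = 𝓕 ⇑f ⋆[ContinuousLinearMap.mul ℂ ℂ] 𝓕 ⇑g := by
    ext x
    simp [H, convolution_apply, fourier_coe]
  have hfg : (fun x => f x * g x) = ⇑(𝓕⁻ H : 𝓢(E, ℂ)) := by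
    ext x
    rw [fourierInv_coe, Real.fourierInv_eq_fourier_neg, ← fourier_coe, fourier_convolution]
    simp [fourier_fourier_apply_neg]
  rw [hfg, ← fourier_coe, FourierTransform.fourier_fourierInv_eq, hH]

theorem support_fourier_mul_subset (f g : 𝓢(E, ℂ)) :
    Function.support (𝓕 fun x => f x * g x) ⊆
      Function.support (𝓕 ⇑f) + Function.support (𝓕 ⇑g) := by
  rw [fourier_mul_eq_convolution]
  exact support_convolution_subset _

theorem fourier_conj_mul_self_eq_zero {F : Type*} [SeminormedAddCommGroup F] (P : E →+ F)
    {R : ℝ} (ψ : 𝓢(E, ℂ)) (hψ : ∀ ξ, R < ‖P ξ‖ → 𝓕 ⇑ψ ξ = 0) {θ : E} (hθ : 2 * R < ‖P θ‖) :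
    𝓕 (fun x => conj (ψ x) * ψ x) θ = 0 := by
  by_contra hne
  obtain ⟨a, ha, b, hb, rfl⟩ :=
    support_fourier_mul_subset (ψ.postcompCLM (Complex.conjCLE : ℂ →L[ℝ] ℂ)) ψ hne
  have hPa : ‖P a‖ ≤ R := not_lt.1 fun h => ha <| by
    show 𝓕 (fun x => conj (ψ x)) a = 0
    rw [Real.fourier_conj, hψ (-a) (by rwa [map_neg, norm_neg]), map_zero]
  have hPb : ‖P b‖ ≤ R := not_lt.1 fun h => hb (hψ b h)
  rw [map_add] at hθ
  linarith [norm_add_le (P a) (P b)]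

end SchwartzMap

theorem integral_mul_eq_apply_zero_of_fourier_eq_one {r : ℝ} (V : 𝓢(E, ℂ))
    (hV : ∀ ξ, ‖ξ‖ ≤ r → 𝓕 ⇑V ξ = 1) {W : E → ℂ} (hW : Integrable W) (hW₀ : ContinuousAt W 0)
    (hFW : ∀ ξ, r < ‖ξ‖ → 𝓕 W ξ = 0) : ∫ y, V y * W y = W 0 := by
  set u : 𝓢(E, ℂ) := 𝓕⁻ V
  have hu : ∀ x, ‖x‖ ≤ r → u x = 1 := fun x hx => by
    rw [SchwartzMap.fourierInv_coe, Real.fourierInv_eq_fourier_neg, hV _ (by rwa [norm_neg])]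
  have hFWint : Integrable (𝓕 W) := by
    refine (VectorFourier.fourierIntegral_continuous Real.continuous_fourierChar
      (innerSL ℝ).continuous₂ hW).integrable_of_hasCompactSupport
      (HasCompactSupport.intro (isCompact_closedBall 0 r) fun ξ hξ => hFW ξ ?_)
    simpa using hξ
  calc ∫ y, V y * W y = ∫ y, 𝓕 ⇑u y * W y := by
        rw [← SchwartzMap.fourier_coe, FourierTransform.fourier_fourierInv_eq]
    _ = ∫ x, u x * 𝓕 W x := Real.integral_fourier_mul_eq u.integrable hW
    _ = ∫ x, 𝓕 W x := by
        congr 1 with x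
        rcases le_or_gt ‖x‖ r with hx | hx
        · rw [hu x hx, one_mul]
        · rw [hFW x hx, mul_zero]
    _ = W 0 := by
        rw [← hW.fourierInv_fourier_eq hFWint hW₀, Real.fourierInv_eq]
        simp

end FourierAnalysis

theorem SchwartzMap.continuous_integral_prod_right {E F G : Type*}
    [NormedAddCommGroup E] [NormedSpace ℝ E] [FiniteDimensional ℝ E]
    [MeasurableSpace E] [BorelSpace E] [NormedAddCommGroup F] [NormedSpace ℝ F]
    [NormedAddCommGroup G] [NormedSpace ℝ G] (μ : Measure E) [μ.IsAddHaarMeasure]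
    (f : 𝓢(E × F, G)) :
    Continuous fun y => ∫ x, f (x, y) ∂μ := by
  -- `‖x‖ ≤ ‖(x, y)‖`, so the decay of `f` gives a majorant in `x` that is uniform in `y`.
  set N := Module.finrank ℝ E + 1
  set C := 2 ^ N * (Finset.Iic (N, 0)).sup (fun m => SchwartzMap.seminorm ℝ m.1 m.2) f
  have hbound : ∀ x y, ‖f (x, y)‖ ≤ C * (1 + ‖x‖) ^ (-(N : ℝ)) := fun x y => by
    have hf := one_add_le_sup_seminorm_apply (𝕜 := ℝ) (m := (N, 0)) le_rfl le_rfl f (x, y)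
    rw [norm_iteratedFDeriv_zero] at hf
    have hx : (1 + ‖x‖) ^ N ≤ (1 + ‖(x, y)‖) ^ N := by gcongr; exact norm_fst_le (x, y)
    rw [Real.rpow_neg (by positivity), Real.rpow_natCast, ← div_eq_mul_inv,
      le_div_iff₀ (by positivity), mul_comm]
    exact (mul_le_mul_of_nonneg_right hx (norm_nonneg _)).trans hf
  refine continuous_of_dominated (bound := fun x => C * (1 + ‖x‖) ^ (-(N : ℝ)))
    (fun y => (f.continuous.comp (Continuous.prodMk_left y)).aestronglyMeasurable)
    (fun y => ae_of_all _ fun x => hbound x y)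
    ((integrable_one_add_norm (by simp [N])).const_mul C)
    (ae_of_all _ fun x => f.continuous.comp (Continuous.prodMk_right x))

section DiagonalIntegral

variable {E : Type*} [NormedAddCommGroup E] [NormedSpace ℝ E]

def shearCLE : (E × E) ≃L[ℝ] (E × E) :=
  let L : (E × E) →L[ℝ] (E × E) :=
    (ContinuousLinearMap.fst ℝ E E).prod
      (ContinuousLinearMap.fst ℝ E E - ContinuousLinearMap.snd ℝ E E)
  ContinuousLinearEquiv.equivOfInverse L L (fun p => by simp [L]) (fun p => by simp [L])

@[simp] lemma shearCLE_apply (p : E × E) : shearCLE p = (p.1, p.1 - p.2) := rfl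

variable [MeasureSpace E]

def SchwartzMap.diagonalIntegral (F : 𝓢(E × E, ℂ)) (y : E) : ℂ := ∫ x, F (x, x - y)

variable [FiniteDimensional ℝ E] [BorelSpace E] [(volume : Measure E).IsAddHaarMeasure]

namespace SchwartzMap

variable (F : 𝓢(E × E, ℂ))

theorem integrable_diagonalIntegral : Integrable F.diagonalIntegral :=
  ((F.compCLMOfContinuousLinearEquiv ℝ shearCLE).integrable
    (μ := volume.prod volume)).integral_prod_right

theorem continuous_diagonalIntegral : Continuous F.diagonalIntegral :=
  (F.compCLMOfContinuousLinearEquiv ℝ shearCLE).continuous_integral_prod_right volume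

theorem integral_integral_mul_sub {c : E → ℂ} (hc : Continuous c) {C : ℝ} (hcC : ∀ y, ‖c y‖ ≤ C) :
    ∫ x₁, ∫ x₂, c (x₁ - x₂) * F (x₁, x₂) = ∫ y, c y * F.diagonalIntegral y := by
  have hint : Integrable (fun p : E × E => c p.2 * F (p.1, p.1 - p.2)) (volume.prod volume) := by
    have hF := (F.compCLMOfContinuousLinearEquiv ℝ shearCLE).integrable (μ := volume.prod volume)
    exact hF.bdd_mul (hc.comp continuous_snd).aestronglyMeasurable (ae_of_all _ fun p => hcC p.2)
  calc ∫ x₁, ∫ x₂, c (x₁ - x₂) * F (x₁, x₂)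
      = ∫ x₁, ∫ y, c y * F (x₁, x₁ - y) := by
        congr 1 with x₁
        rw [← integral_sub_left_eq_self _ volume x₁]
        simp
    _ = ∫ y, ∫ x₁, c y * F (x₁, x₁ - y) := integral_integral_swap hint
    _ = ∫ y, c y * F.diagonalIntegral y := by simp_rw [integral_const_mul, diagonalIntegral]

end SchwartzMap
end DiagonalIntegral

lemma pack_apply (a b : R2) (p : Fin 2 × Fin 2) :
    pack a b p = if p.1 = 0 then a p.2 else b p.2 := rfl

lemma projv_apply (i : Fin 2) (x : D2) (j : Fin 2) : projv i x j = x (i, j) := rfl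

@[simp] lemma projv_zero_pack (a b : R2) : projv 0 (pack a b) = a := by
  ext j; simp [projv_apply, pack_apply]

@[simp] lemma projv_one_pack (a b : R2) : projv 1 (pack a b) = b := by
  ext j; simp [projv_apply, pack_apply]

@[simp] lemma pack_projv (x : D2) : pack (projv 0 x) (projv 1 x) = x := by
  ext ⟨i, j⟩
  fin_cases i <;> simp [pack_apply, projv_apply]

lemma projv_add (i : Fin 2) (x y : D2) : projv i (x + y) = projv i x + projv i y := by
  ext j; simp [projv_apply]

def packCLE : (R2 × R2) ≃L[ℝ] D2 :=
  LinearEquiv.toContinuousLinearEquiv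
    { toFun p := pack p.1 p.2
      invFun x := (projv 0 x, projv 1 x)
      map_add' p q := by ext ⟨i, j⟩; fin_cases i <;> simp [pack_apply]
      map_smul' r p := by ext ⟨i, j⟩; fin_cases i <;> simp [pack_apply]
      left_inv p := by simp
      right_inv x := by simp }

@[simp] lemma packCLE_apply (p : R2 × R2) : packCLE p = pack p.1 p.2 := rfl

lemma inner_pack (a b c d : R2) : ⟪pack a b, pack c d⟫ = ⟪a, c⟫ + ⟪b, d⟫ := by
  simp [PiLp.inner_apply, Fintype.sum_prod_type, Fin.sum_univ_two, pack_apply]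

def finTwoSumEquivProd : (Fin 2 ⊕ Fin 2) ≃ (Fin 2 × Fin 2) where
  toFun := Sum.elim (fun j => (0, j)) (fun j => (1, j))
  invFun p := if p.1 = 0 then Sum.inl p.2 else Sum.inr p.2
  left_inv := by rintro (j | j) <;> simp
  right_inv := by rintro ⟨i, j⟩; fin_cases i <;> simp

lemma measurePreserving_pack :
    MeasurePreserving (fun p : R2 × R2 => pack p.1 p.2) (volume.prod volume) volume := by
  have h := (((EuclideanSpace.volume_preserving_symm_measurableEquiv_toLp (Fin 2 × Fin 2)).symm.comp
    (volume_measurePreserving_piCongrLeft (fun _ => ℝ) finTwoSumEquivProd)).comp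
    (volume_measurePreserving_sumPiEquivProdPi_symm fun _ : Fin 2 ⊕ Fin 2 => ℝ)).comp
    ((EuclideanSpace.volume_preserving_symm_measurableEquiv_toLp (Fin 2)).prod
      (EuclideanSpace.volume_preserving_symm_measurableEquiv_toLp (Fin 2)))
  refine (funext fun p => ?_ : (fun p : R2 × R2 => pack p.1 p.2) = _) ▸ h
  ext ⟨i, j⟩
  fin_cases i <;> simp [pack_apply, MeasurableEquiv.piCongrLeft, Equiv.piCongrLeft,
    MeasurableEquiv.sumPiEquivProdPi, finTwoSumEquivProd, Equiv.piCongrLeft']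

lemma measurableEmbedding_pack : MeasurableEmbedding fun p : R2 × R2 => pack p.1 p.2 :=
  packCLE.toHomeomorph.measurableEmbedding

lemma integral_pack {G : Type*} [NormedAddCommGroup G] [NormedSpace ℝ G] {g : D2 → G}
    (hg : Integrable g) : ∫ z, g z = ∫ x₁, ∫ x₂, g (pack x₁ x₂) := by
  rw [← measurePreserving_pack.integral_comp measurableEmbedding_pack, integral_prod]
  exact (measurePreserving_pack.integrable_comp_emb measurableEmbedding_pack).2 hg

theorem fourier_diagonalIntegral_comp_pack (Φ : 𝓢(D2, ℂ)) (η : R2) :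
    𝓕 (Φ.compCLMOfContinuousLinearEquiv ℝ packCLE).diagonalIntegral η =
      𝓕 ⇑Φ (pack η (-η)) := by
  have hchar : Continuous fun y : R2 => (𝐞 (-⟪y, η⟫) : ℂ) := by fun_prop
  rw [Real.fourier_eq ⇑Φ, integral_pack ((Real.fourierIntegral_convergent_iff _).2 Φ.integrable),
    Real.fourier_eq]
  simp_rw [Circle.smul_def, smul_eq_mul]
  rw [← SchwartzMap.integral_integral_mul_sub _ hchar fun y => (Circle.norm_coe _).le]
  simp only [SchwartzMap.compCLMOfContinuousLinearEquiv_apply, Function.comp_apply, packCLE_apply,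
    inner_pack, inner_neg_right, inner_sub_left]
  ring_nf

theorem stmt_10_general (R : ℝ) (V : SchwartzMap R2 ℂ)
    (hV : ∀ ξ : R2, ‖ξ‖ ≤ 2 * R → 𝓕 (⇑V) ξ = 1)
    (ψ : SchwartzMap D2 ℂ)
    (hψ : ∀ ξ : D2, (R < ‖projv 0 ξ‖ ∨ R < ‖projv 1 ξ‖) → 𝓕 (⇑ψ) ξ = 0) :
    (∫ x₁ : R2, ∫ x₂ : R2, V (x₁ - x₂) * ((‖ψ (pack x₁ x₂)‖ ^ 2 : ℝ) : ℂ)) =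
      ((∫ x : R2, ‖ψ (pack x x)‖ ^ 2 : ℝ) : ℂ) := by
  set Φ : 𝓢(D2, ℂ) := SchwartzMap.pairing (ContinuousLinearMap.mul ℝ ℂ)
    (ψ.postcompCLM (Complex.conjCLE : ℂ →L[ℝ] ℂ)) ψ
  set F := Φ.compCLMOfContinuousLinearEquiv ℝ packCLE
  have hF : ∀ x₁ x₂, F (x₁, x₂) = ((‖ψ (pack x₁ x₂)‖ ^ 2 : ℝ) : ℂ) := fun x₁ x₂ => by
    simp [F, Φ, Complex.conj_mul']
  have hFW : ∀ η : R2, 2 * R < ‖η‖ → 𝓕 F.diagonalIntegral η = 0 := fun η hη => by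
    rw [fourier_diagonalIntegral_comp_pack]
    exact SchwartzMap.fourier_conj_mul_self_eq_zero (AddMonoidHom.mk' (projv 0) (projv_add 0)) ψ
      (fun ξ h => hψ ξ (Or.inl h)) (by simpa using hη)
  calc (∫ x₁ : R2, ∫ x₂ : R2, V (x₁ - x₂) * ((‖ψ (pack x₁ x₂)‖ ^ 2 : ℝ) : ℂ))
      = ∫ y, V y * F.diagonalIntegral y := by
        simp_rw [← hF]
        exact F.integral_integral_mul_sub V.continuous (V.norm_le_seminorm ℝ)
    _ = F.diagonalIntegral 0 := integral_mul_eq_apply_zero_of_fourier_eq_one V hV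
        F.integrable_diagonalIntegral F.continuous_diagonalIntegral.continuousAt hFW
    _ = ((∫ x : R2, ‖ψ (pack x x)‖ ^ 2 : ℝ) : ℂ) := by
        simp_rw [SchwartzMap.diagonalIntegral, sub_zero, hF]
        exact integral_ofReal

/-- **Frequency-localized potentials act as the delta function** (the identity `J_V = J_δ`
in the proof of Lemma 2.9): if `𝓕V = 1` on the ball of radius `2R` and `ψ` has both
frequencies supported in the ball of radius `R`, then
`∫∫ V(x₁−x₂)|ψ(x₁,x₂)|² dx₁dx₂ = ∫ |ψ(x,x)|² dx`. -/
theorem stmt_10 (R : ℝ) (hR : 0 < R) (V : SchwartzMap R2 ℂ)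
    (hV : ∀ ξ : R2, ‖ξ‖ ≤ 2 * R → 𝓕 (⇑V) ξ = 1)
    (ψ : SchwartzMap D2 ℂ)
    (hψ : ∀ ξ : D2, (R < ‖projv 0 ξ‖ ∨ R < ‖projv 1 ξ‖) → 𝓕 (⇑ψ) ξ = 0) :
    (∫ x₁ : R2, ∫ x₂ : R2, V (x₁ - x₂) * ((‖ψ (pack x₁ x₂)‖ ^ 2 : ℝ) : ℂ)) =
      ((∫ x : R2, ‖ψ (pack x x)‖ ^ 2 : ℝ) : ℂ) :=
  stmt_10_general R V hV ψ hψ
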